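/- Assume P satisfies positive–negative conditional independence with strictly positive conditionals, and let ℋ be a set of score functions 𝒳 × 𝒴 → ℝ containing some r* with σ(r*(x,y) − r*(x,y')) = ω_P(y ≻ y' | x) for all x and y ≠ y' with P(x,y,y') + P(x,y',y) > 0. Then (1) r* minimizes the population BT objective over ℋ, i.e., L_BT(r*) ≤ L_BT(r) for all r ∈ ℋ; and (2) every r̂ ∈ ℋ with L_BT(r̂) ≤ L_BT(r) for all r ∈ ℋ satisfies σ(r̂(x,y) − r̂(x,y')) = ω_P(y ≻ y' | x) for all x and y ≠ y' with P(x,y,y') + P(x,y',y) > 0. -/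

import Mathlib

/-!
Pair the terms of the Bradley–Terry log-likelihood over `(y, y')` and `(y', y)`. For a pair
with masses `a, b` and `s = σ(r x y - r x y')` the paired term is `a log s + b log (1 - s)`,
which by Gibbs' inequality is uniquely maximised at `s = a / (a + b)`, the CPRD. A score
realising the CPRD therefore maximises every paired term, and any other score loses strictly
on some pair of positive mass.
-/

open scoped BigOperators

/-- The sigmoid function σ(t) = 1/(1+e^{-t}). -/
noncomputable def sigmoid (t : ℝ) : ℝ := 1 / (1 + Real.exp (-t))

/-- The population Bradley–Terry objective. -/
noncomputable def LBT {X Y : Type*} [Fintype X] [Fintype Y]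
    (P : X → Y → Y → ℝ) (r : X → Y → ℝ) : ℝ :=
  -∑ x, ∑ y, ∑ y', P x y y' * Real.log (sigmoid (r x y - r x y'))

open Finset

theorem sigmoid_eq_real_sigmoid : sigmoid = Real.sigmoid :=
  funext fun t => by rw [Real.sigmoid_def, sigmoid, one_div]

lemma sigmoid_pos (t : ℝ) : 0 < sigmoid t := sigmoid_eq_real_sigmoid ▸ Real.sigmoid_pos t

lemma sigmoid_lt_one (t : ℝ) : sigmoid t < 1 := sigmoid_eq_real_sigmoid ▸ Real.sigmoid_lt_one t

lemma sigmoid_neg (t : ℝ) : sigmoid (-t) = 1 - sigmoid t :=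
  sigmoid_eq_real_sigmoid ▸ Real.sigmoid_neg t

lemma mul_log_add_mul_log_one_sub_lt {a b s : ℝ} (ha : 0 < a) (hb : 0 < b) (hs0 : 0 < s)
    (hs1 : s < 1) (hs : s ≠ a / (a + b)) :
    a * Real.log s + b * Real.log (1 - s) <
      a * Real.log (a / (a + b)) + b * Real.log (b / (a + b)) := by
  have hab : 0 < a + b := add_pos ha hb
  have hs1' : 0 < 1 - s := sub_pos.mpr hs1
  have key_a : Real.log (s * (a + b) / a) < s * (a + b) / a - 1 :=
    Real.log_lt_sub_one_of_pos (by positivity) fun h => hs <| by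
      field_simp at h ⊢; linarith
  have key_b : Real.log ((1 - s) * (a + b) / b) ≤ (1 - s) * (a + b) / b - 1 :=
    Real.log_le_sub_one_of_pos (by positivity)
  rw [Real.log_div (by positivity) ha.ne', Real.log_mul hs0.ne' hab.ne'] at key_a
  rw [Real.log_div (by positivity) hb.ne', Real.log_mul hs1'.ne' hab.ne'] at key_b
  rw [Real.log_div ha.ne' hab.ne', Real.log_div hb.ne' hab.ne']
  have ea : a * (s * (a + b) / a - 1) = s * (a + b) - a := by field_simp
  have eb : b * ((1 - s) * (a + b) / b - 1) = (1 - s) * (a + b) - b := by field_simp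
  linarith [mul_lt_mul_of_pos_left key_a ha, mul_le_mul_of_nonneg_left key_b hb.le]

lemma mul_log_add_mul_log_one_sub_le {a b s : ℝ} (ha : 0 < a) (hb : 0 < b) (hs0 : 0 < s)
    (hs1 : s < 1) :
    a * Real.log s + b * Real.log (1 - s) ≤
      a * Real.log (a / (a + b)) + b * Real.log (b / (a + b)) := by
  rcases eq_or_ne s (a / (a + b)) with rfl | hs
  · have : 1 - a / (a + b) = b / (a + b) := by field_simp; ring
    rw [this]
  · exact (mul_log_add_mul_log_one_sub_lt ha hb hs0 hs1 hs).le

section BradleyTerry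

variable {X Y : Type*}

def RealizesCPRD (P : X → Y → Y → ℝ) (r : X → Y → ℝ) : Prop :=
  ∀ x : X, ∀ y y' : Y, y ≠ y' → 0 < P x y y' + P x y' y →
    sigmoid (r x y - r x y') = P x y y' / (P x y y' + P x y' y)

noncomputable def pairLogLik (P : X → Y → Y → ℝ) (r : X → Y → ℝ) (x : X) (y y' : Y) : ℝ :=
  P x y y' * Real.log (sigmoid (r x y - r x y')) +
    P x y' y * Real.log (sigmoid (r x y' - r x y))

lemma LBT_eq_neg_half_sum_pairLogLik [Fintype X] [Fintype Y] (P : X → Y → Y → ℝ)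
    (r : X → Y → ℝ) : LBT P r = -(1 / 2) * ∑ x, ∑ y, ∑ y', pairLogLik P r x y y' := by
  have hswap : ∀ x, ∑ y, ∑ y', P x y' y * Real.log (sigmoid (r x y' - r x y)) =
      ∑ y, ∑ y', P x y y' * Real.log (sigmoid (r x y - r x y')) := fun _ => sum_comm
  simp only [LBT, pairLogLik, sum_add_distrib, hswap]
  ring

lemma pairLogLik_eq_mul_log_one_sub (P : X → Y → Y → ℝ) (r : X → Y → ℝ) (x : X) (y y' : Y) :
    pairLogLik P r x y y' =
      P x y y' * Real.log (sigmoid (r x y - r x y')) +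
        P x y' y * Real.log (1 - sigmoid (r x y - r x y')) := by
  rw [pairLogLik, show r x y' - r x y = -(r x y - r x y') by ring, sigmoid_neg]

variable {P : X → Y → Y → ℝ} {rstar : X → Y → ℝ}

-- `σ` takes values in `(0, 1)`, hence so does a realised CPRD.
lemma RealizesCPRD.pos_and_pos (hrstar : RealizesCPRD P rstar) {x : X} {y y' : Y}
    (hyy : y ≠ y') (hab : 0 < P x y y' + P x y' y) : 0 < P x y y' ∧ 0 < P x y' y := by
  have h0 := sigmoid_pos (rstar x y - rstar x y')
  have h1 := sigmoid_lt_one (rstar x y - rstar x y')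
  rw [hrstar x y y' hyy hab, div_pos_iff_of_pos_right hab] at h0
  rw [hrstar x y y' hyy hab, div_lt_one hab] at h1
  exact ⟨h0, by linarith⟩

lemma RealizesCPRD.pairLogLik_eq (hrstar : RealizesCPRD P rstar) {x : X} {y y' : Y}
    (hyy : y ≠ y') (hab : 0 < P x y y' + P x y' y) :
    pairLogLik P rstar x y y' =
      P x y y' * Real.log (P x y y' / (P x y y' + P x y' y)) +
        P x y' y * Real.log (P x y' y / (P x y y' + P x y' y)) := by
  rw [pairLogLik, hrstar x y y' hyy hab, hrstar x y' y hyy.symm (by linarith), add_comm (P x y' y)]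

lemma RealizesCPRD.pairLogLik_lt (hrstar : RealizesCPRD P rstar) (r : X → Y → ℝ) {x : X}
    {y y' : Y} (hyy : y ≠ y') (hab : 0 < P x y y' + P x y' y)
    (hr : sigmoid (r x y - r x y') ≠ P x y y' / (P x y y' + P x y' y)) :
    pairLogLik P r x y y' < pairLogLik P rstar x y y' := by
  obtain ⟨ha, hb⟩ := hrstar.pos_and_pos hyy hab
  rw [hrstar.pairLogLik_eq hyy hab, pairLogLik_eq_mul_log_one_sub]
  exact mul_log_add_mul_log_one_sub_lt ha hb (sigmoid_pos _) (sigmoid_lt_one _) hr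

lemma RealizesCPRD.pairLogLik_le (hP : ∀ x y y', 0 ≤ P x y y')
    (hrstar : RealizesCPRD P rstar) (r : X → Y → ℝ) (x : X) (y y' : Y) :
    pairLogLik P r x y y' ≤ pairLogLik P rstar x y y' := by
  rcases eq_or_ne y y' with rfl | hyy
  · simp only [pairLogLik, sub_self, le_refl]
  rcases (add_nonneg (hP x y y') (hP x y' y)).lt_or_eq with hab | hzero
  · obtain ⟨ha, hb⟩ := hrstar.pos_and_pos hyy hab
    rw [hrstar.pairLogLik_eq hyy hab, pairLogLik_eq_mul_log_one_sub]
    exact mul_log_add_mul_log_one_sub_le ha hb (sigmoid_pos _) (sigmoid_lt_one _)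
  · have ha : P x y y' = 0 := by linarith [hP x y y', hP x y' y]
    have hb : P x y' y = 0 := by linarith [hP x y y', hP x y' y]
    simp only [pairLogLik, ha, hb, zero_mul, add_zero, le_refl]

variable [Fintype X] [Fintype Y]

theorem RealizesCPRD.LBT_le (hP : ∀ x y y', 0 ≤ P x y y') (hrstar : RealizesCPRD P rstar)
    (r : X → Y → ℝ) : LBT P rstar ≤ LBT P r := by
  rw [LBT_eq_neg_half_sum_pairLogLik, LBT_eq_neg_half_sum_pairLogLik]
  have : ∑ x, ∑ y, ∑ y', pairLogLik P r x y y' ≤ ∑ x, ∑ y, ∑ y', pairLogLik P rstar x y y' :=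
    sum_le_sum fun x _ => sum_le_sum fun y _ => sum_le_sum fun y' _ =>
      hrstar.pairLogLik_le hP r x y y'
  linarith

theorem RealizesCPRD.of_LBT_le (hP : ∀ x y y', 0 ≤ P x y y') (hrstar : RealizesCPRD P rstar)
    {rhat : X → Y → ℝ} (hmin : LBT P rhat ≤ LBT P rstar) : RealizesCPRD P rhat := by
  intro x y y' hyy hab
  by_contra hne
  have hle := fun x y y' => hrstar.pairLogLik_le hP rhat x y y'
  have hlt : ∑ x, ∑ y, ∑ y', pairLogLik P rhat x y y' <
      ∑ x, ∑ y, ∑ y', pairLogLik P rstar x y y' :=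
    sum_lt_sum (fun x _ => sum_le_sum fun y _ => sum_le_sum fun y' _ => hle x y y')
      ⟨x, mem_univ _, sum_lt_sum (fun y _ => sum_le_sum fun y' _ => hle x y y')
        ⟨y, mem_univ _, sum_lt_sum (fun y' _ => hle x y y')
          ⟨y', mem_univ _, hrstar.pairLogLik_lt rhat hyy hab hne⟩⟩⟩
  rw [LBT_eq_neg_half_sum_pairLogLik, LBT_eq_neg_half_sum_pairLogLik] at hmin
  linarith

end BradleyTerry

theorem stmt_7_general {X Y : Type*} [Fintype X] [Fintype Y]
    (P : X → Y → Y → ℝ) (PX : X → ℝ) (pplus pminus : X → Y → ℝ)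
    (hPX0 : ∀ x, 0 ≤ PX x)
    (hp0 : ∀ x y, 0 < pplus x y) (hm0 : ∀ x y, 0 < pminus x y)
    (hfact : ∀ x yp ym, P x yp ym = PX x * pplus x yp * pminus x ym)
    (H : Set (X → Y → ℝ)) (rstar : X → Y → ℝ) (hrstarH : rstar ∈ H)
    (hrstar : ∀ x : X, ∀ y y' : Y, y ≠ y' → 0 < P x y y' + P x y' y →
      sigmoid (rstar x y - rstar x y') = P x y y' / (P x y y' + P x y' y)) :
    (∀ r ∈ H, LBT P rstar ≤ LBT P r) ∧
    (∀ rhat ∈ H, (∀ r ∈ H, LBT P rhat ≤ LBT P r) →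
      ∀ x : X, ∀ y y' : Y, y ≠ y' → 0 < P x y y' + P x y' y →
        sigmoid (rhat x y - rhat x y') = P x y y' / (P x y y' + P x y' y)) := by
  have hP : ∀ x y y', 0 ≤ P x y y' := fun x y y' => by
    rw [hfact]
    exact mul_nonneg (mul_nonneg (hPX0 x) (hp0 x y).le) (hm0 x y').le
  exact ⟨fun r _ => RealizesCPRD.LBT_le hP hrstar r,
    fun _ _ hmin => RealizesCPRD.of_LBT_le hP hrstar (hmin rstar hrstarH)⟩

/-- Consistency under positive–negative conditional independence: if P factorizes with strictly
positive conditionals and ℋ contains a score r* realizing the CPRD, then (1) r* minimizes the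
population BT objective over ℋ, and (2) every minimizer of the population BT objective over ℋ
realizes the CPRD on the support of the comparison distribution. -/
theorem stmt_7 {X Y : Type*} [Fintype X] [Fintype Y] [Nonempty X] [Nonempty Y]
    (P : X → Y → Y → ℝ) (PX : X → ℝ) (pplus pminus : X → Y → ℝ)
    (hPX0 : ∀ x, 0 ≤ PX x) (hPX1 : ∑ x, PX x = 1)
    (hp0 : ∀ x y, 0 < pplus x y) (hm0 : ∀ x y, 0 < pminus x y)
    (hp1 : ∀ x, ∑ y, pplus x y = 1) (hm1 : ∀ x, ∑ y, pminus x y = 1)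
    (hfact : ∀ x yp ym, P x yp ym = PX x * pplus x yp * pminus x ym)
    (H : Set (X → Y → ℝ)) (rstar : X → Y → ℝ) (hrstarH : rstar ∈ H)
    (hrstar : ∀ x : X, ∀ y y' : Y, y ≠ y' → 0 < P x y y' + P x y' y →
      sigmoid (rstar x y - rstar x y') = P x y y' / (P x y y' + P x y' y)) :
    (∀ r ∈ H, LBT P rstar ≤ LBT P r) ∧
    (∀ rhat ∈ H, (∀ r ∈ H, LBT P rhat ≤ LBT P r) →
      ∀ x : X, ∀ y y' : Y, y ≠ y' → 0 < P x y y' + P x y' y →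
        sigmoid (rhat x y - rhat x y') = P x y y' / (P x y y' + P x y' y)) :=
  stmt_7_general P PX pplus pminus hPX0 hp0 hm0 hfact H rstar hrstarH hrstar
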